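/- Let f ∈ ℝ^{n×d}, 0 ≠ w ∈ ℝ^d, a ∈ ℝⁿ, λ > 0, and E(x;f,a,w) = ½‖f−x‖_F² + λ‖xw−a‖. Then the minimal value of E over x ∈ ℝ^{n×d} equals ‖fw−a‖²/(2‖w‖²) if ‖fw−a‖ ≤ λ‖w‖², and equals ‖w‖²(λ²/2 + λ(‖fw−a‖/‖w‖² − λ)) = ½λ²‖w‖² + λ(‖fw−a‖ − λ‖w‖²) if ‖fw−a‖ > λ‖w‖². -/
import Mathlib


open scoped Classical

noncomputable section

private lemma tri_aux' {n : ℕ} (r s : Fin n → ℝ) :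
    Real.sqrt (∑ i, r i ^ 2) ≤
      Real.sqrt (∑ i, (r i - s i) ^ 2) + Real.sqrt (∑ i, s i ^ 2) := by
  set T := Real.sqrt (∑ i, (r i - s i) ^ 2) with hTdef
  set S := Real.sqrt (∑ i, s i ^ 2) with hSdef
  have hT : 0 ≤ T := Real.sqrt_nonneg _
  have hS : 0 ≤ S := Real.sqrt_nonneg _
  have hCS : ∑ i, (r i - s i) * s i ≤ T * S :=
    Real.sum_mul_le_sqrt_mul_sqrt _ _ _
  have hTsq : T ^ 2 = ∑ i, (r i - s i) ^ 2 :=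
    Real.sq_sqrt (Finset.sum_nonneg fun i _ => sq_nonneg _)
  have hSsq : S ^ 2 = ∑ i, s i ^ 2 :=
    Real.sq_sqrt (Finset.sum_nonneg fun i _ => sq_nonneg _)
  have hexp : ∑ i, r i ^ 2
      = (∑ i, (r i - s i) ^ 2) + 2 * (∑ i, (r i - s i) * s i) + ∑ i, s i ^ 2 := by
    rw [Finset.mul_sum, ← Finset.sum_add_distrib, ← Finset.sum_add_distrib]
    exact Finset.sum_congr rfl fun i _ => by ring
  have key : ∑ i, r i ^ 2 ≤ (T + S) ^ 2 := by nlinarith [hCS]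
  calc Real.sqrt (∑ i, r i ^ 2) ≤ Real.sqrt ((T + S) ^ 2) := Real.sqrt_le_sqrt key
    _ = T + S := Real.sqrt_sq (by positivity)

/-- **Lemma 3.2 (minimal value part).** The minimal value of
`E(x; f, a, w) = ½‖f − x‖_F² + λ‖xw − a‖` over `x ∈ ℝ^{n×d}` equals
`‖fw−a‖²/(2‖w‖²)` if `‖fw−a‖ ≤ λ‖w‖²`, and
`½λ²‖w‖² + λ(‖fw−a‖ − λ‖w‖²)` otherwise. -/
theorem second_order_tv_prox_min_value
    (n d : ℕ) (f : Fin n → Fin d → ℝ) (w : Fin d → ℝ) (hw : w ≠ 0)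
    (a : Fin n → ℝ) (lam : ℝ) (hlam : 0 < lam)
    (E : (Fin n → Fin d → ℝ) → ℝ)
    (hE : ∀ x, E x = (1 / 2) * (∑ i, ∑ j, (f i j - x i j) ^ 2)
        + lam * Real.sqrt (∑ i, (∑ j, x i j * w j - a i) ^ 2)) :
    IsLeast (Set.range E)
      (if Real.sqrt (∑ i, (∑ j, f i j * w j - a i) ^ 2) ≤ lam * (∑ j, (w j) ^ 2)
       then (∑ i, (∑ j, f i j * w j - a i) ^ 2) / (2 * ∑ j, (w j) ^ 2)
       else (1 / 2) * lam ^ 2 * (∑ j, (w j) ^ 2)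
          + lam * (Real.sqrt (∑ i, (∑ j, f i j * w j - a i) ^ 2)
              - lam * (∑ j, (w j) ^ 2))) := by
  have hWpos : (0:ℝ) < ∑ j, (w j) ^ 2 := by
    obtain ⟨j, hj⟩ : ∃ j, w j ≠ 0 := by
      by_contra h; push_neg at h; exact hw (funext h)
    exact lt_of_lt_of_le (by positivity)
      (Finset.single_le_sum (fun i _ => sq_nonneg (w i)) (Finset.mem_univ j))
  set W := ∑ j, (w j) ^ 2 with hWdef
  set R2 := ∑ i, (∑ j, f i j * w j - a i) ^ 2 with hR2def
  have hR2nonneg : 0 ≤ R2 :=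
    Finset.sum_nonneg fun i _ => sq_nonneg _
  set R := Real.sqrt R2 with hRdef
  have hRnonneg : 0 ≤ R := Real.sqrt_nonneg _
  have hRsq : R ^ 2 = R2 := Real.sq_sqrt hR2nonneg
  -- value of E at the scaled candidate
  have key : ∀ t : ℝ, 0 ≤ 1 - t * W →
      E (fun i j => f i j - t * (∑ k, f i k * w k - a i) * w j)
        = (1 / 2) * (t ^ 2 * R2 * W) + lam * ((1 - t * W) * R) := by
    intro t ht
    rw [hE]
    have h1 : ∀ i : Fin n, ∑ j, (f i j - (f i j - t * (∑ k, f i k * w k - a i) * w j)) ^ 2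
        = t ^ 2 * (∑ k, f i k * w k - a i) ^ 2 * W := by
      intro i
      rw [hWdef, Finset.mul_sum]
      exact Finset.sum_congr rfl fun j _ => by ring
    have h2 : ∀ i : Fin n,
        (∑ j, (f i j - t * (∑ k, f i k * w k - a i) * w j) * w j) - a i
          = (∑ k, f i k * w k - a i) * (1 - t * W) := by
      intro i
      have hs : ∑ j, (f i j - t * (∑ k, f i k * w k - a i) * w j) * w j
          = (∑ j, f i j * w j) - t * (∑ k, f i k * w k - a i) * W := by
        rw [hWdef, Finset.mul_sum, ← Finset.sum_sub_distrib]
        exact Finset.sum_congr rfl fun j _ => by ring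
      rw [hs]; ring
    have h3 : ∑ i, ∑ j, (f i j - (f i j - t * (∑ k, f i k * w k - a i) * w j)) ^ 2
        = t ^ 2 * R2 * W := by
      rw [hR2def, Finset.sum_congr rfl fun i _ => h1 i, ← Finset.sum_mul,
        ← Finset.mul_sum]
    have h4 : ∑ i, ((∑ j, (f i j - t * (∑ k, f i k * w k - a i) * w j) * w j) - a i) ^ 2
        = (1 - t * W) ^ 2 * R2 := by
      rw [Finset.sum_congr rfl fun i _ => by rw [h2 i]]
      simp_rw [mul_pow]
      rw [← Finset.sum_mul, hR2def]
      exact mul_comm _ _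
    rw [h3, h4, Real.sqrt_mul (sq_nonneg _), Real.sqrt_sq ht, hRdef]
  constructor
  · -- membership: the explicit minimizer attains the value
    by_cases hcase : R ≤ lam * W
    · rw [if_pos hcase]
      refine ⟨fun i j => f i j - (1 / W) * (∑ k, f i k * w k - a i) * w j, ?_⟩
      rw [key (1 / W) (by rw [one_div, inv_mul_cancel₀ hWpos.ne']; norm_num)]
      field_simp
      ring
    · rw [if_neg hcase]
      push_neg at hcase
      have hRpos : 0 < R := lt_trans (by positivity) hcase
      refine ⟨fun i j => f i j - (lam / R) * (∑ k, f i k * w k - a i) * w j, ?_⟩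
      have ht : 0 ≤ 1 - lam / R * W := by
        rw [sub_nonneg, div_mul_eq_mul_div, div_le_one hRpos]
        exact le_of_lt hcase
      rw [key (lam / R) ht, ← hRsq]
      field_simp
  · -- lower bound
    rintro v ⟨x, rfl⟩
    rw [hE]
    set s : Fin n → ℝ := fun i => ∑ j, x i j * w j - a i with hsdef
    set S := Real.sqrt (∑ i, s i ^ 2) with hSdef
    have hSnonneg : 0 ≤ S := Real.sqrt_nonneg _
    have hSsq : S ^ 2 = ∑ i, s i ^ 2 :=
      Real.sq_sqrt (Finset.sum_nonneg fun i _ => sq_nonneg _)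
    set r : Fin n → ℝ := fun i => ∑ j, f i j * w j - a i with hrdef
    set T := Real.sqrt (∑ i, (r i - s i) ^ 2) with hTdef
    have hTnonneg : 0 ≤ T := Real.sqrt_nonneg _
    have hTsq : T ^ 2 = ∑ i, (r i - s i) ^ 2 :=
      Real.sq_sqrt (Finset.sum_nonneg fun i _ => sq_nonneg _)
    have hRr : R = Real.sqrt (∑ i, r i ^ 2) := by rw [hRdef, hR2def]
    have htri : R ≤ T + S := by rw [hRr, hSdef, hTdef]; exact tri_aux' r s
    -- row-wise Cauchy–Schwarz
    have hQ : ∑ i, (r i - s i) ^ 2 ≤ (∑ i, ∑ j, (f i j - x i j) ^ 2) * W := by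
      rw [Finset.sum_mul]
      refine Finset.sum_le_sum fun i _ => ?_
      have hdiff : r i - s i = ∑ j, (f i j - x i j) * w j := by
        simp only [hrdef, hsdef]
        rw [show (∑ j, f i j * w j) - a i - ((∑ j, x i j * w j) - a i)
            = (∑ j, f i j * w j) - (∑ j, x i j * w j) by ring,
          ← Finset.sum_sub_distrib]
        exact Finset.sum_congr rfl fun j _ => by ring
      rw [hdiff, hWdef]
      exact Finset.sum_mul_sq_le_sq_mul_sq _ _ _
    have hD2 : T ^ 2 ≤ (∑ i, ∑ j, (f i j - x i j) ^ 2) * W := hTsq ▸ hQ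
    set D2 := ∑ i, ∑ j, (f i j - x i j) ^ 2 with hD2def
    have hD2nonneg : 0 ≤ D2 := Finset.sum_nonneg fun i _ =>
      Finset.sum_nonneg fun j _ => sq_nonneg _
    split_ifs with hcase
    · -- R ≤ lam W ; show R2/(2W) ≤ ½D2 + lam S
      rw [← hRsq, div_le_iff₀ (by positivity)]
      have hA : 0 ≤ T - R + S := by linarith
      nlinarith [sq_nonneg (T - R), mul_nonneg hRnonneg hA,
        mul_nonneg hSnonneg (sub_nonneg.mpr hcase), hD2]
    · push_neg at hcase
      have hA : 0 ≤ T - R + S := by linarith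
      nlinarith [sq_nonneg (T - lam * W), mul_nonneg (mul_nonneg hlam.le hWpos.le) hA,
        hD2, hWpos, hSnonneg, hTnonneg]
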